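/- arXiv:2207.06452 — 2 statements merged into one kernel-verified Lean document; each statement's English description precedes it below -/
import Mathlib

section
/- Let f : ℝⁿ → ℝ be differentiable with L_g-Lipschitz continuous gradient, Q ∈ ℝ^{n×p} with ‖Q‖ ≤ Q_max, x ∈ ℝⁿ, and define f̂(s) = f(x + Q s). Let 0 < δ ≤ δ_max, c₁ ≥ 1, and let s₀ = 0, s₁, ..., s_p ∈ ℝᵖ be affinely independent points with ‖sᵢ‖ ≤ c₁ δ for all i. Set ρ = max_i ‖sᵢ − s₀‖ and L̂ = (1/ρ)[s₁ − s₀, ..., s_p − s₀] ∈ ℝ^{p×p}. Let κ'_eg = (1/2) c₁ L_g Q_max², and let y₀, y₁, ..., y_p ∈ ℝ satisfy | yᵢ − f̂(sᵢ) | ≤ (1/2) κ'_eg ρ min{δ, δ²} for all i. Let (a₀, a) ∈ ℝ × ℝᵖ be the unique solution of a₀ + aᵀ sᵢ = yᵢ for i = 0, ..., p, and let m̂(s) = a₀ + aᵀ s. Then for all s ∈ ℝᵖ with ‖s‖ ≤ δ, | f̂(s) − m̂(s) | ≤ (1/2) (1 + (1/2) c₁² δ_max + 2 c₁ √p ‖L̂⁻¹‖)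 L_g Q_max² δ². -/
open MeasureTheory Matrix
open scoped RealInnerProductSpace

/-- The operator norm of a real matrix with respect to Euclidean norms
(a norm consistent with the Euclidean norm). -/
noncomputable def matOpNorm {n p : ℕ} (Q : Matrix (Fin n) (Fin p) ℝ) : ℝ :=
  ‖LinearMap.toContinuousLinearMap (Matrix.toEuclideanLin Q)‖

lemma taylor_quad {E : Type*} [NormedAddCommGroup E] [InnerProductSpace ℝ E]
    (F : E → ℝ) (hF : Differentiable ℝ F) (C : ℝ)
    (h : ∀ u v, ‖fderiv ℝ F u - fderiv ℝ F v‖ ≤ C * ‖u - v‖) (u v : E) :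
    |F v - F u - fderiv ℝ F u (v - u)| ≤ C / 2 * ‖v - u‖ ^ 2 := by
  set z := v - u with hz
  set γ : ℝ → E := fun t => u + t • z with hγdef
  have hγ : ∀ t : ℝ, HasDerivAt γ z t := fun t => by
    simpa [hγdef] using ((hasDerivAt_id t).smul_const z).const_add u
  set φ' : ℝ → ℝ := fun t => fderiv ℝ F (γ t) z with hφ'def
  have hφ : ∀ t : ℝ, HasDerivAt (fun t => F (γ t)) (φ' t) t := fun t =>
    (hF (γ t)).hasFDerivAt.comp_hasDerivAt t (hγ t)
  have hlipD : LipschitzWith (Real.toNNReal (C * ‖z‖)) (fun t : ℝ => fderiv ℝ F (γ t)) := by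
    apply LipschitzWith.of_dist_le_mul
    intro t₁ t₂
    rw [dist_eq_norm, dist_eq_norm]
    calc ‖fderiv ℝ F (γ t₁) - fderiv ℝ F (γ t₂)‖ ≤ C * ‖γ t₁ - γ t₂‖ := h _ _
      _ = C * ‖z‖ * ‖t₁ - t₂‖ := by
          simp only [hγdef]
          rw [show (u + t₁ • z) - (u + t₂ • z) = (t₁ - t₂) • z by module]
          rw [norm_smul, Real.norm_eq_abs]; ring
      _ ≤ (Real.toNNReal (C * ‖z‖) : ℝ) * ‖t₁ - t₂‖ :=
          mul_le_mul_of_nonneg_right (Real.le_coe_toNNReal _) (norm_nonneg _)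
  have hcont : Continuous φ' := by
    exact (ContinuousLinearMap.apply ℝ ℝ z).continuous.comp hlipD.continuous
  have hFTC : ∫ t in (0:ℝ)..1, φ' t = F (γ 1) - F (γ 0) := by
    apply intervalIntegral.integral_eq_sub_of_hasDerivAt (f := fun t => F (γ t))
    · intro t _; exact hφ t
    · exact hcont.intervalIntegrable 0 1
  have hγ1 : γ 1 = v := by simp [hγdef, hz]
  have hγ0 : γ 0 = u := by simp [hγdef]
  have key : F v - F u - fderiv ℝ F u z = ∫ t in (0:ℝ)..1, (φ' t - φ' 0) := by
    rw [intervalIntegral.integral_sub (hcont.intervalIntegrable 0 1)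
      (intervalIntegrable_const), hFTC, hγ1, hγ0]
    simp [hφ'def, hγ0]
  rw [key, ← Real.norm_eq_abs]
  have hbound : ∀ t ∈ Set.uIoc (0:ℝ) 1, ‖φ' t - φ' 0‖ ≤ (C * ‖z‖^2) * t := by
    intro t ht
    rw [Set.uIoc_of_le zero_le_one] at ht
    have ht0 : 0 < t := ht.1
    have : φ' t - φ' 0 = (fderiv ℝ F (γ t) - fderiv ℝ F (γ 0)) z := by
      simp [hφ'def]
    rw [this]
    calc ‖(fderiv ℝ F (γ t) - fderiv ℝ F (γ 0)) z‖
        ≤ ‖fderiv ℝ F (γ t) - fderiv ℝ F (γ 0)‖ * ‖z‖ := ContinuousLinearMap.le_opNorm _ _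
      _ ≤ (C * ‖γ t - γ 0‖) * ‖z‖ := mul_le_mul_of_nonneg_right (h _ _) (norm_nonneg _)
      _ = (C * ‖z‖^2) * t := by
          simp only [hγdef]
          rw [show (u + t • z) - (u + (0:ℝ) • z) = t • z by module, norm_smul,
            Real.norm_eq_abs, abs_of_pos ht0]
          ring
  have hCz : 0 ≤ C * ‖z‖ := le_trans (norm_nonneg _) (by simpa [hz] using h v u)
  have hCz2 : 0 ≤ C * ‖z‖ ^ 2 := by nlinarith [norm_nonneg z]
  calc ‖∫ t in (0:ℝ)..1, (φ' t - φ' 0)‖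
      ≤ |∫ t in (0:ℝ)..1, (C * ‖z‖^2) * t| := by
        apply intervalIntegral.norm_integral_le_abs_of_norm_le ?_ ?_
        · exact (ae_restrict_iff' measurableSet_uIoc).mpr (ae_of_all _ hbound)
        · exact (continuous_const.mul continuous_id).intervalIntegrable 0 1
    _ = C / 2 * ‖z‖ ^ 2 := by
        rw [intervalIntegral.integral_const_mul, integral_id]
        rw [abs_of_nonneg (by nlinarith)]
        ring

lemma matOpNorm_transpose {q p : ℕ} (M : Matrix (Fin q) (Fin p) ℝ) :
    matOpNorm Mᵀ = matOpNorm M := by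
  have h1 : Mᵀ = Mᴴ := by ext i j; simp [conjTranspose_apply]
  rw [matOpNorm, h1, Matrix.toEuclideanLin_conjTranspose_eq_adjoint,
    LinearMap.adjoint_toContinuousLinearMap]
  exact (ContinuousLinearMap.adjoint (𝕜 := ℝ)).norm_map _

set_option maxHeartbeats 1600000 in
/-- **Part 2 of Theorem 3.11 (function-value accuracy of the interpolation model).** -/
theorem stmt_6 {n p : ℕ} (hp : 0 < p)
    (f : EuclideanSpace ℝ (Fin n) → ℝ) (hf : Differentiable ℝ f) (Lg : ℝ)
    (hlip : ∀ y z : EuclideanSpace ℝ (Fin n),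
      ‖gradient f y - gradient f z‖ ≤ Lg * ‖y - z‖)
    (Q : Matrix (Fin n) (Fin p) ℝ) (Qmax : ℝ) (hQmaxpos : 0 < Qmax)
    (hQ : matOpNorm Q ≤ Qmax)
    (x : EuclideanSpace ℝ (Fin n))
    (δ δmax c₁ : ℝ) (hδ : 0 < δ) (hδmax : δ ≤ δmax) (hc₁ : 1 ≤ c₁)
    -- the interpolation points s₀ = 0, s₁, …, s_p
    (s : Fin (p + 1) → EuclideanSpace ℝ (Fin p)) (hs0 : s 0 = 0)
    (haffind : LinearIndependent ℝ (fun i : Fin p => s i.succ - s 0))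
    (hsball : ∀ i, ‖s i‖ ≤ c₁ * δ)
    (ρ : ℝ) (hρub : ∀ i, ‖s i - s 0‖ ≤ ρ) (hρmax : ∃ i, ‖s i - s 0‖ = ρ)
    -- the matrix L̂ = (1/ρ)[s₁ - s₀, …, s_p - s₀]
    (Lhat : Matrix (Fin p) (Fin p) ℝ)
    (hLhat : Lhat = Matrix.of fun a b : Fin p => (s b.succ - s 0) a / ρ)
    -- the function values, accurate up to (1/2) κ'_eg ρ min{δ, δ²}
    (y : Fin (p + 1) → ℝ)
    (hy : ∀ i, |y i - f (x + Matrix.toEuclideanLin Q (s i))|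
      ≤ 1 / 2 * (1 / 2 * c₁ * Lg * Qmax ^ 2) * ρ * min δ (δ ^ 2))
    -- the interpolation model m̂(s) = a₀ + aᵀ s
    (a₀ : ℝ) (a : EuclideanSpace ℝ (Fin p))
    (hinterp : ∀ i, a₀ + ⟪a, s i⟫ = y i) :
    ∀ t : EuclideanSpace ℝ (Fin p), ‖t‖ ≤ δ →
    |f (x + Matrix.toEuclideanLin Q t) - (a₀ + ⟪a, t⟫)|
      ≤ 1 / 2 * (1 + 1 / 2 * c₁ ^ 2 * δmax + 2 * c₁ * Real.sqrt p * matOpNorm Lhat⁻¹)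
        * Lg * Qmax ^ 2 * δ ^ 2 := by
  intro t ht
  have hc₁0 : (0:ℝ) < c₁ := lt_of_lt_of_le one_pos hc₁
  -- ρ is positive
  have hρ0 : 0 < ρ := by
    have hne : s (Fin.succ ⟨0, hp⟩) - s 0 ≠ 0 := haffind.ne_zero ⟨0, hp⟩
    have := hρub (Fin.succ ⟨0, hp⟩)
    have hpos : 0 < ‖s (Fin.succ ⟨0, hp⟩) - s 0‖ := norm_pos_iff.mpr hne
    linarith
  have hminpos : 0 < min δ (δ ^ 2) := lt_min hδ (by positivity)
  -- Lg is nonnegative (else hy 0 is contradictory)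
  rcases lt_or_ge Lg 0 with hLgneg | hLg
  · exfalso
    have h0 := hy 0
    have habs : (0:ℝ) ≤ |y 0 - f (x + Matrix.toEuclideanLin Q (s 0))| := abs_nonneg _
    have hQm2 : (0:ℝ) < Qmax ^ 2 := by positivity
    have hneg : 1 / 2 * (1 / 2 * c₁ * Lg * Qmax ^ 2) < 0 := by
      nlinarith [mul_neg_of_neg_of_pos hLgneg (mul_pos hc₁0 hQm2)]
    have : 1 / 2 * (1 / 2 * c₁ * Lg * Qmax ^ 2) * ρ * min δ (δ ^ 2) < 0 :=
      mul_neg_of_neg_of_pos (mul_neg_of_neg_of_pos hneg hρ0) hminpos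
    linarith
  set κ := Lg * Qmax ^ 2 with hκ
  have hκ0 : 0 ≤ κ := mul_nonneg hLg (by positivity)
  set A := LinearMap.toContinuousLinearMap (Matrix.toEuclideanLin Q) with hA
  have hAnorm : ‖A‖ ≤ Qmax := hQ
  set fhat : EuclideanSpace ℝ (Fin p) → ℝ := fun u => f (x + A u) with hfhat
  have hfd : ∀ u, HasFDerivAt fhat ((fderiv ℝ f (x + A u)).comp A) u := fun u =>
    (hf (x + A u)).hasFDerivAt.comp u (A.hasFDerivAt.const_add x)
  have hfhatdiff : Differentiable ℝ fhat := fun u => (hfd u).differentiableAt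
  have hfderiv : ∀ u, fderiv ℝ fhat u = (fderiv ℝ f (x + A u)).comp A := fun u => (hfd u).fderiv
  have hDlip : ∀ y z : EuclideanSpace ℝ (Fin n),
      ‖fderiv ℝ f y - fderiv ℝ f z‖ ≤ Lg * ‖y - z‖ := by
    intro y z
    have h := hlip y z
    unfold gradient at h
    rwa [← map_sub, LinearIsometryEquiv.norm_map] at h
  have hfhatlip : ∀ u v : EuclideanSpace ℝ (Fin p),
      ‖fderiv ℝ fhat u - fderiv ℝ fhat v‖ ≤ κ * ‖u - v‖ := by
    intro u v
    rw [hfderiv, hfderiv, ← ContinuousLinearMap.sub_comp]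
    have h1 : ‖A (u - v)‖ ≤ ‖A‖ * ‖u - v‖ := A.le_opNorm _
    have h2 : (0:ℝ) ≤ ‖A‖ := norm_nonneg _
    calc ‖(fderiv ℝ f (x + A u) - fderiv ℝ f (x + A v)).comp A‖
        ≤ ‖fderiv ℝ f (x + A u) - fderiv ℝ f (x + A v)‖ * ‖A‖ :=
          ContinuousLinearMap.opNorm_comp_le _ _
      _ ≤ (Lg * ‖(x + A u) - (x + A v)‖) * ‖A‖ :=
          mul_le_mul_of_nonneg_right (hDlip _ _) h2
      _ = (Lg * ‖A (u - v)‖) * ‖A‖ := by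
          rw [show (x + A u) - (x + A v) = A (u - v) by rw [map_sub]; abel]
      _ ≤ κ * ‖u - v‖ := by
          rw [hκ]
          have e1 : Lg * ‖A (u - v)‖ ≤ Lg * (‖A‖ * ‖u - v‖) :=
            mul_le_mul_of_nonneg_left h1 hLg
          have e2 : Lg * ‖A (u - v)‖ * ‖A‖ ≤ Lg * (‖A‖ * ‖u - v‖) * ‖A‖ :=
            mul_le_mul_of_nonneg_right e1 h2
          have e3 : ‖A‖ * ‖A‖ ≤ Qmax * Qmax :=
            mul_le_mul hAnorm hAnorm h2 hQmaxpos.le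
          have e4 : (Lg * ‖u - v‖) * (‖A‖ * ‖A‖) ≤ (Lg * ‖u - v‖) * (Qmax * Qmax) :=
            mul_le_mul_of_nonneg_left e3 (mul_nonneg hLg (norm_nonneg _))
          have e5 : Lg * (‖A‖ * ‖u - v‖) * ‖A‖ = (Lg * ‖u - v‖) * (‖A‖ * ‖A‖) := by ring
          have e6 : (Lg * ‖u - v‖) * (Qmax * Qmax) = Lg * Qmax ^ 2 * ‖u - v‖ := by ring
          linarith
  -- Taylor bound for fhat at 0
  have htaylor : ∀ u : EuclideanSpace ℝ (Fin p),
      |fhat u - fhat 0 - fderiv ℝ fhat 0 u| ≤ κ / 2 * ‖u‖ ^ 2 := by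
    intro u
    have := taylor_quad fhat hfhatdiff κ hfhatlip 0 u
    simpa using this
  have hfhat0 : fhat 0 = f x := by simp [hfhat]
  set ℓ := fderiv ℝ fhat 0 with hℓ
  set g := (InnerProductSpace.toDual ℝ (EuclideanSpace ℝ (Fin p))).symm ℓ with hg
  set w := g - a with hw
  have hwin : ∀ u : EuclideanSpace ℝ (Fin p), ⟪w, u⟫ = ℓ u - ⟪a, u⟫ := by
    intro u
    rw [hw, inner_sub_left, hg, InnerProductSpace.toDual_symm_apply]
  have ha0 : a₀ = y 0 := by
    have h := hinterp 0
    rw [hs0, inner_zero_right, add_zero] at h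
    exact h
  -- the function value errors in terms of fhat
  have hyf : ∀ i, |y i - fhat (s i)|
      ≤ 1 / 2 * (1 / 2 * c₁ * Lg * Qmax ^ 2) * ρ * min δ (δ ^ 2) := by
    intro i
    have h := hy i
    simpa only [hfhat, hA, LinearMap.coe_toContinuousLinearMap'] using h
  have hρle : ρ ≤ c₁ * δ := by
    obtain ⟨i, hi⟩ := hρmax
    rw [← hi, hs0, sub_zero]
    exact hsball i
  -- componentwise bound
  have hcomp : ∀ i : Fin p, |⟪w, s i.succ⟫| ≤ c₁ * κ * δ * ρ := by
    intro i
    have h1 := htaylor (s i.succ)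
    have h2 := hyf i.succ
    have h3 : |y 0 - fhat 0| ≤ 1 / 2 * (1 / 2 * c₁ * Lg * Qmax ^ 2) * ρ * min δ (δ ^ 2) := by
      have h := hyf 0
      rwa [hs0] at h
    have hain : ⟪a, s i.succ⟫ = y i.succ - y 0 := by
      have h := hinterp i.succ
      rw [ha0] at h
      linarith
    have hid : ⟪w, s i.succ⟫ = -(fhat (s i.succ) - fhat 0 - ℓ (s i.succ))
        - (y i.succ - fhat (s i.succ)) + (y 0 - fhat 0) := by
      rw [hwin, hain]; ring
    have hnu : ‖s i.succ‖ ≤ ρ := by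
      have h := hρub i.succ
      rwa [hs0, sub_zero] at h
    have hmin : min δ (δ ^ 2) ≤ δ := min_le_left _ _
    have q1 : ‖s i.succ‖ ^ 2 ≤ ρ ^ 2 := pow_le_pow_left₀ (norm_nonneg _) hnu 2
    have q2 : ρ ^ 2 ≤ c₁ * δ * ρ := by
      have := mul_le_mul_of_nonneg_right hρle hρ0.le
      calc ρ ^ 2 = ρ * ρ := sq ρ
        _ ≤ c₁ * δ * ρ := this
    have e1 : κ / 2 * ‖s i.succ‖ ^ 2 ≤ κ / 2 * (c₁ * δ * ρ) :=
      mul_le_mul_of_nonneg_left (q1.trans q2) (by linarith only [hκ0])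
    have hnn4 : (0:ℝ) ≤ 1 / 2 * (1 / 2 * c₁ * Lg * Qmax ^ 2) * ρ := by
      have : (0:ℝ) ≤ 1 / 2 * c₁ * Lg * Qmax ^ 2 :=
        mul_nonneg (mul_nonneg (by linarith only [hc₁0]) hLg) (sq_nonneg Qmax)
      have := mul_nonneg (by linarith only [this] :
        (0:ℝ) ≤ 1 / 2 * (1 / 2 * c₁ * Lg * Qmax ^ 2)) hρ0.le
      linarith only [this]
    have e2' := mul_le_mul_of_nonneg_left hmin hnn4
    have e2 : 1 / 2 * (1 / 2 * c₁ * Lg * Qmax ^ 2) * ρ * min δ (δ ^ 2)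
        ≤ 1 / 4 * (c₁ * κ * ρ * δ) := by
      rw [hκ]
      linarith only [e2']
    rw [hid, abs_le]
    have hb1 := abs_le.mp h1
    have hb2 := abs_le.mp h2
    have hb3 := abs_le.mp h3
    constructor <;>
      linarith only [hb1.1, hb1.2, hb2.1, hb2.2, hb3.1, hb3.2, e1, e2]
  -- the matrix Lhatᵀ and its action on w
  set B := Lhatᵀ with hB
  have hBw : ∀ i : Fin p, (Matrix.toEuclideanLin B w) i = ⟪w, s i.succ⟫ / ρ := by
    intro i
    have hcf : (Matrix.toEuclideanLin B w) i = ∑ j, B i j * w j := by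
      have h := congrFun (Matrix.ofLp_toEuclideanLin_apply B w) i
      simpa [Matrix.mulVec, dotProduct] using h
    rw [hcf]
    rw [PiLp.inner_apply]
    simp only [hB, Matrix.transpose_apply, hLhat, Matrix.of_apply, hs0, sub_zero,
      RCLike.inner_apply, conj_trivial]
    rw [Finset.sum_div]
    apply Finset.sum_congr rfl
    intro j _
    ring
  have hcκδ : 0 ≤ c₁ * κ * δ := by positivity
  have hzn : ‖Matrix.toEuclideanLin B w‖ ≤ Real.sqrt p * (c₁ * κ * δ) := by
    rw [EuclideanSpace.norm_eq]
    have hcompsq : ∀ i : Fin p, ‖(Matrix.toEuclideanLin B w) i‖ ^ 2 ≤ (c₁ * κ * δ) ^ 2 := by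
      intro i
      have h1 : |(Matrix.toEuclideanLin B w) i| ≤ c₁ * κ * δ := by
        rw [hBw i, abs_div, abs_of_pos hρ0, div_le_iff₀ hρ0]
        exact hcomp i
      rw [Real.norm_eq_abs]
      nlinarith [abs_nonneg ((Matrix.toEuclideanLin B w) i)]
    calc Real.sqrt (∑ i, ‖(Matrix.toEuclideanLin B w) i‖ ^ 2)
        ≤ Real.sqrt (p * (c₁ * κ * δ) ^ 2) := by
          apply Real.sqrt_le_sqrt
          calc ∑ i, ‖(Matrix.toEuclideanLin B w) i‖ ^ 2
              ≤ ∑ _i : Fin p, (c₁ * κ * δ) ^ 2 := Finset.sum_le_sum fun i _ => hcompsq i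
            _ = p * (c₁ * κ * δ) ^ 2 := by simp [Finset.sum_const]
      _ = Real.sqrt p * (c₁ * κ * δ) := by
          rw [Real.sqrt_mul (by positivity), Real.sqrt_sq hcκδ]
  -- invertibility of Lhat
  have hcolind : LinearIndependent ℝ (fun i : Fin p =>
      (Matrix.of fun a b : Fin p => (s b.succ - s 0) a)ᵀ i) := by
    have hmap1 : LinearIndependent ℝ (fun i : Fin p =>
        (WithLp.linearEquiv 2 ℝ (Fin p → ℝ)) (s i.succ - s 0)) :=
      haffind.map' (WithLp.linearEquiv 2 ℝ (Fin p → ℝ)).toLinearMap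
        (LinearEquiv.ker _)
    exact hmap1
  have hunitM : IsUnit (Matrix.of fun a b : Fin p => (s b.succ - s 0) a) :=
    Matrix.linearIndependent_cols_iff_isUnit.mp hcolind
  have hLsmul : Lhat = (ρ⁻¹ : ℝ) • (Matrix.of fun a b : Fin p => (s b.succ - s 0) a) := by
    ext i j
    simp [hLhat, div_eq_inv_mul]
  have hunit : IsUnit Lhat := by
    rw [Matrix.isUnit_iff_isUnit_det, hLsmul, Matrix.det_smul]
    exact (IsUnit.pow (Fintype.card (Fin p)) (isUnit_iff_ne_zero.mpr (inv_ne_zero hρ0.ne'))).mul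
      ((Matrix.isUnit_iff_isUnit_det _).mp hunitM)
  have hunitB : IsUnit B := by
    rw [hB, Matrix.isUnit_transpose]
    exact hunit
  have hBinvB : B⁻¹ * B = 1 := Matrix.nonsing_inv_mul B ((Matrix.isUnit_iff_isUnit_det B).mp hunitB)
  have hwrec : w = Matrix.toEuclideanLin B⁻¹ (Matrix.toEuclideanLin B w) := by
    rw [Matrix.toEuclideanLin_apply, Matrix.ofLp_toEuclideanLin_apply,
      Matrix.mulVec_mulVec, hBinvB, Matrix.one_mulVec, WithLp.toLp_ofLp]
  have hNB : matOpNorm B⁻¹ = matOpNorm Lhat⁻¹ := by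
    rw [hB, ← Matrix.transpose_nonsing_inv, matOpNorm_transpose]
  have hwn : ‖w‖ ≤ matOpNorm Lhat⁻¹ * (Real.sqrt p * (c₁ * κ * δ)) := by
    have h1 : ‖w‖ ≤ matOpNorm B⁻¹ * ‖Matrix.toEuclideanLin B w‖ := by
      conv_lhs => rw [hwrec]
      exact (LinearMap.toContinuousLinearMap (Matrix.toEuclideanLin B⁻¹)).le_opNorm _
    rw [hNB] at h1
    calc ‖w‖ ≤ matOpNorm Lhat⁻¹ * ‖Matrix.toEuclideanLin B w‖ := h1
      _ ≤ matOpNorm Lhat⁻¹ * (Real.sqrt p * (c₁ * κ * δ)) :=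
          mul_le_mul_of_nonneg_left hzn (norm_nonneg _)
  -- final assembly
  have hdecomp : f (x + Matrix.toEuclideanLin Q t) - (a₀ + ⟪a, t⟫)
      = (fhat t - fhat 0 - ℓ t) + (fhat 0 - y 0) + ⟪w, t⟫ := by
    have hft : f (x + Matrix.toEuclideanLin Q t) = fhat t := by
      simp only [hfhat, hA, LinearMap.coe_toContinuousLinearMap']
    rw [hft, hwin, ha0]
    ring
  have b1 : |fhat t - fhat 0 - ℓ t| ≤ κ / 2 * δ ^ 2 := by
    refine (htaylor t).trans ?_
    exact mul_le_mul_of_nonneg_left (pow_le_pow_left₀ (norm_nonneg t) ht 2)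
      (by linarith only [hκ0])
  have b2 : |fhat 0 - y 0| ≤ 1 / 4 * c₁ ^ 2 * δmax * κ * δ ^ 2 := by
    have h := hyf 0
    rw [hs0] at h
    rw [abs_sub_comm]
    refine h.trans ?_
    have hmin2 : min δ (δ ^ 2) ≤ δ ^ 2 := min_le_right _ _
    have hρle2 : ρ ≤ c₁ * δmax := by
      have := mul_le_mul_of_nonneg_left hδmax hc₁0.le
      linarith only [hρle, this]
    have hP : (0:ℝ) ≤ 1 / 2 * c₁ * Lg * Qmax ^ 2 :=
      mul_nonneg (mul_nonneg (by linarith only [hc₁0]) hLg) (sq_nonneg Qmax)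
    have s1 : 1 / 2 * (1 / 2 * c₁ * Lg * Qmax ^ 2) * ρ * min δ (δ ^ 2)
        ≤ 1 / 2 * (1 / 2 * c₁ * Lg * Qmax ^ 2) * ρ * δ ^ 2 :=
      mul_le_mul_of_nonneg_left hmin2
        (mul_nonneg (by linarith only [hP]) hρ0.le)
    have s2 : (1 / 2 * (1 / 2 * c₁ * Lg * Qmax ^ 2) * δ ^ 2) * ρ
        ≤ (1 / 2 * (1 / 2 * c₁ * Lg * Qmax ^ 2) * δ ^ 2) * (c₁ * δmax) :=
      mul_le_mul_of_nonneg_left hρle2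
        (mul_nonneg (by linarith only [hP]) (sq_nonneg δ))
    rw [hκ]
    linarith only [s1, s2]
  have b3 : |⟪w, t⟫| ≤ matOpNorm Lhat⁻¹ * (Real.sqrt p * (c₁ * κ * δ)) * δ := by
    calc |⟪w, t⟫| ≤ ‖w‖ * ‖t‖ := abs_real_inner_le_norm _ _
      _ ≤ matOpNorm Lhat⁻¹ * (Real.sqrt p * (c₁ * κ * δ)) * δ := by
          apply mul_le_mul hwn ht (norm_nonneg t)
          exact le_trans (norm_nonneg w) hwn
  have hrhs : 1 / 2 * (1 + 1 / 2 * c₁ ^ 2 * δmax + 2 * c₁ * Real.sqrt p * matOpNorm Lhat⁻¹)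
        * Lg * Qmax ^ 2 * δ ^ 2
      = κ / 2 * δ ^ 2 + 1 / 4 * c₁ ^ 2 * δmax * κ * δ ^ 2
        + matOpNorm Lhat⁻¹ * (Real.sqrt p * (c₁ * κ * δ)) * δ := by
    rw [hκ]; ring
  rw [hdecomp, hrhs]
  calc |(fhat t - fhat 0 - ℓ t) + (fhat 0 - y 0) + ⟪w, t⟫|
      ≤ |(fhat t - fhat 0 - ℓ t) + (fhat 0 - y 0)| + |⟪w, t⟫| := abs_add_le _ _
    _ ≤ |fhat t - fhat 0 - ℓ t| + |fhat 0 - y 0| + |⟪w, t⟫| := by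
        have := abs_add_le (fhat t - fhat 0 - ℓ t) (fhat 0 - y 0)
        linarith
    _ ≤ κ / 2 * δ ^ 2 + 1 / 4 * c₁ ^ 2 * δmax * κ * δ ^ 2
        + matOpNorm Lhat⁻¹ * (Real.sqrt p * (c₁ * κ * δ)) * δ := by
        linarith
end

section
/- Let f : ℝⁿ → ℝ be differentiable, Q ∈ ℝ^{n×p}, x ∈ ℝⁿ, δ > 0, and let m̂(s) = c + ĝᵀ s + (1/2) sᵀ Ĥ s be a quadratic model with symmetric Ĥ satisfying ‖Ĥ‖ ≤ κ_h for some κ_h ≥ 1. Suppose m̂ is a (κ_ef, κ_eg; Q)-fully linear model of f in B(x, δ; Q), the trial step s_k with ‖s_k‖ ≤ δ satisfies m̂(0) − m̂(s_k) ≥ (κ_fcd/2) ‖ĝ‖ min{δ, ‖ĝ‖/max(‖Ĥ‖, 1)} for some κ_fcd ∈ (0,1], and the estimates f⁰, fˢ are ε_f-accurate for f(x) and f(x + Q s_k) with radius δ, where 0 < ε_f ≤ κ_ef. Let η₁ ∈ (0,1) and η₂ > 0. If δ ≤ min{ 1/κ_h, 1/η₂, κ_fcd(1 − η₁)/(8 κ_ef)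 } ‖ĝ‖, then the iteration is successful, i.e., ρ := (f⁰ − fˢ)/(m̂(0) − m̂(s_k)) ≥ η₁ and ‖ĝ‖ ≥ η₂ δ. -/
open MeasureTheory Matrix
open scoped RealInnerProductSpace

theorem le_mul_of_le_min_mul_left {a b t δ : ℝ} (ht : 0 ≤ t) (h : δ ≤ min a b * t) :
    δ ≤ a * t :=
  h.trans (mul_le_mul_of_nonneg_right (min_le_left a b) ht)

theorem le_mul_of_le_min_mul_right {a b t δ : ℝ} (ht : 0 ≤ t) (h : δ ≤ min a b * t) :
    δ ≤ b * t :=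
  h.trans (mul_le_mul_of_nonneg_right (min_le_right a b) ht)

theorem mul_le_of_le_div_mul {a c t δ : ℝ} (hc : 0 < c) (h : δ ≤ a / c * t) :
    c * δ ≤ a * t := by
  rwa [div_mul_eq_mul_div, le_div_iff₀ hc, mul_comm] at h

theorem min_div_max_one_eq_left {δ b h κ : ℝ} (hδ : 0 ≤ δ) (hκ : 1 ≤ κ) (hh : h ≤ κ)
    (hb : κ * δ ≤ b) : min δ (b / max h 1) = δ := by
  refine min_eq_left ((le_div_iff₀ (by positivity)).2 ?_)
  nlinarith [max_le hh hκ]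

theorem model_decrease_sub_le_estimate_decrease {f0 fs F0 Fs m0 ms ε κ r : ℝ}
    (hr : 0 ≤ r) (hε : ε ≤ κ) (hf0 : |f0 - F0| ≤ ε * r) (hfs : |fs - Fs| ≤ ε * r)
    (hm0 : |F0 - m0| ≤ κ * r) (hms : |Fs - ms| ≤ κ * r) :
    (m0 - ms) - 4 * κ * r ≤ f0 - fs := by
  have hεκ : ε * r ≤ κ * r := mul_le_mul_of_nonneg_right hε hr
  linarith [abs_le.1 hf0, abs_le.1 hfs, abs_le.1 hm0, abs_le.1 hms]

theorem le_div_of_sub_le_of_le_one_sub_mul {N D E η : ℝ} (hD : 0 < D) (hN : D - E ≤ N)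
    (hE : E ≤ (1 - η) * D) : η ≤ N / D := by
  rw [le_div_iff₀ hD]
  linarith

theorem stmt_10_general {n p : ℕ} (f : EuclideanSpace ℝ (Fin n) → ℝ)
    (Q : Matrix (Fin n) (Fin p) ℝ) (x : EuclideanSpace ℝ (Fin n))
    (δ : ℝ) (hδ : 0 < δ)
    -- the quadratic model m̂(s) = c + ĝᵀ s + (1/2) sᵀ Ĥ s
    (g : EuclideanSpace ℝ (Fin p)) (H : Matrix (Fin p) (Fin p) ℝ)
    (κh : ℝ) (hκh : 1 ≤ κh) (hH : matOpNorm H ≤ κh)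
    (mhat : EuclideanSpace ℝ (Fin p) → ℝ)
    -- (κ_ef, κ_eg; Q)-full linearity of the model in B(x, δ; Q)
    (κef κeg : ℝ) (hκef : 0 < κef)
    (hfl : ∀ t : EuclideanSpace ℝ (Fin p), ‖t‖ ≤ δ →
      |f (x + Matrix.toEuclideanLin Q t) - mhat t| ≤ κef * δ ^ 2 ∧
      ‖Matrix.toEuclideanLin Qᵀ (gradient f (x + Matrix.toEuclideanLin Q t))
          - (g + Matrix.toEuclideanLin H t)‖ ≤ κeg * δ)
    -- the trial step with the fraction-of-Cauchy-decrease property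
    (sk : EuclideanSpace ℝ (Fin p)) (hsk : ‖sk‖ ≤ δ)
    (κfcd : ℝ) (hκfcd : κfcd ∈ Set.Ioc (0:ℝ) 1)
    (hcauchy : mhat 0 - mhat sk
      ≥ κfcd / 2 * ‖g‖ * min δ (‖g‖ / max (matOpNorm H) 1))
    -- ε_f-accurate estimates of f(x) and f(x + Q s_k)
    (εf : ℝ) (hεf : εf ≤ κef) (f0 fs : ℝ)
    (hf0 : |f0 - f x| ≤ εf * δ ^ 2)
    (hfs : |fs - f (x + Matrix.toEuclideanLin Q sk)| ≤ εf * δ ^ 2)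
    (η₁ η₂ : ℝ) (hη₁ : η₁ ∈ Set.Ioo (0:ℝ) 1) (hη₂ : 0 < η₂)
    (hδsmall : δ ≤ min (min (1 / κh) (1 / η₂)) (κfcd * (1 - η₁) / (8 * κef)) * ‖g‖) :
    (f0 - fs) / (mhat 0 - mhat sk) ≥ η₁ ∧ ‖g‖ ≥ η₂ * δ := by
  obtain ⟨hκfcd0, -⟩ := hκfcd
  obtain ⟨-, hη₁1⟩ := hη₁
  have hg := norm_nonneg g
  have hδκh := le_mul_of_le_min_mul_left hg (le_mul_of_le_min_mul_left hg hδsmall)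
  have hδη₂ := le_mul_of_le_min_mul_right hg (le_mul_of_le_min_mul_left hg hδsmall)
  have hδκef := le_mul_of_le_min_mul_right hg hδsmall
  have hκhδ : κh * δ ≤ ‖g‖ := by simpa using mul_le_of_le_div_mul (by linarith) hδκh
  refine ⟨?_, by simpa using mul_le_of_le_div_mul hη₂ hδη₂⟩
  rw [min_div_max_one_eq_left hδ.le hκh hH hκhδ] at hcauchy
  have hgpos : 0 < ‖g‖ := by nlinarith
  have hdecrease : 0 < mhat 0 - mhat sk := lt_of_lt_of_le (by positivity) hcauchy
  have hfl0 : |f x - mhat 0| ≤ κef * δ ^ 2 := by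
    simpa using (hfl 0 (by simpa using hδ.le)).1
  refine le_div_of_sub_le_of_le_one_sub_mul hdecrease
    (model_decrease_sub_le_estimate_decrease (sq_nonneg δ) hεf hf0 hfs hfl0 (hfl sk hsk).1) ?_
  have hκef8 := mul_le_of_le_div_mul (by positivity) hδκef
  calc 4 * κef * δ ^ 2 ≤ (1 - η₁) * (κfcd / 2 * ‖g‖ * δ) := by nlinarith
    _ ≤ (1 - η₁) * (mhat 0 - mhat sk) := mul_le_mul_of_nonneg_left hcauchy (by linarith)

/-- **Lemma 4.5.** If the model is `(κ_ef, κ_eg; Q)`-fully linear, the estimates are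
`ε_f`-accurate with `ε_f ≤ κ_ef`, and `δ ≤ min{1/κ_h, 1/η₂, κ_fcd (1 - η₁)/(8 κ_ef)} ‖ĝ‖`,
then the iteration is successful. -/
theorem stmt_10 {n p : ℕ} (f : EuclideanSpace ℝ (Fin n) → ℝ) (hf : Differentiable ℝ f)
    (Q : Matrix (Fin n) (Fin p) ℝ) (x : EuclideanSpace ℝ (Fin n))
    (δ : ℝ) (hδ : 0 < δ)
    -- the quadratic model m̂(s) = c + ĝᵀ s + (1/2) sᵀ Ĥ s
    (c : ℝ) (g : EuclideanSpace ℝ (Fin p)) (H : Matrix (Fin p) (Fin p) ℝ)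
    (hHsymm : H.IsSymm) (κh : ℝ) (hκh : 1 ≤ κh) (hH : matOpNorm H ≤ κh)
    (mhat : EuclideanSpace ℝ (Fin p) → ℝ)
    (hmhat : ∀ t, mhat t = c + ⟪g, t⟫ + 1 / 2 * ⟪t, Matrix.toEuclideanLin H t⟫)
    -- (κ_ef, κ_eg; Q)-full linearity of the model in B(x, δ; Q)
    (κef κeg : ℝ) (hκef : 0 < κef) (hκeg : 0 < κeg)
    (hfl : ∀ t : EuclideanSpace ℝ (Fin p), ‖t‖ ≤ δ →
      |f (x + Matrix.toEuclideanLin Q t) - mhat t| ≤ κef * δ ^ 2 ∧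
      ‖Matrix.toEuclideanLin Qᵀ (gradient f (x + Matrix.toEuclideanLin Q t))
          - (g + Matrix.toEuclideanLin H t)‖ ≤ κeg * δ)
    -- the trial step with the fraction-of-Cauchy-decrease property
    (sk : EuclideanSpace ℝ (Fin p)) (hsk : ‖sk‖ ≤ δ)
    (κfcd : ℝ) (hκfcd : κfcd ∈ Set.Ioc (0:ℝ) 1)
    (hcauchy : mhat 0 - mhat sk
      ≥ κfcd / 2 * ‖g‖ * min δ (‖g‖ / max (matOpNorm H) 1))
    -- ε_f-accurate estimates of f(x) and f(x + Q s_k)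
    (εf : ℝ) (hεf0 : 0 < εf) (hεf : εf ≤ κef) (f0 fs : ℝ)
    (hf0 : |f0 - f x| ≤ εf * δ ^ 2)
    (hfs : |fs - f (x + Matrix.toEuclideanLin Q sk)| ≤ εf * δ ^ 2)
    (η₁ η₂ : ℝ) (hη₁ : η₁ ∈ Set.Ioo (0:ℝ) 1) (hη₂ : 0 < η₂)
    (hδsmall : δ ≤ min (min (1 / κh) (1 / η₂)) (κfcd * (1 - η₁) / (8 * κef)) * ‖g‖) :
    (f0 - fs) / (mhat 0 - mhat sk) ≥ η₁ ∧ ‖g‖ ≥ η₂ * δ :=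
  stmt_10_general f Q x δ hδ g H κh hκh hH mhat κef κeg hκef hfl sk hsk κfcd hκfcd hcauchy εf hεf f0
    fs hf0 hfs η₁ η₂ hη₁ hη₂ hδsmall
end
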